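/- Let ε ∈ [0,1), let ρ*_ε = max over p ∈ [0,1/2] of H_b(p)/(p + 1/(1-ε)), let p_ε be the corresponding maximizer, and define h*_ε: [0,1] → ℝ by h*_ε(z) = (1-ε)·H_b(z) - z·(1-ε)·ρ*_ε for 0 ≤ z ≤ p_ε and h*_ε(z) = ρ*_ε for p_ε ≤ z ≤ 1. Then the Bellman equation holds: for every z ∈ [0,1], h*_ε(z) + ρ*_ε = sup over δ ∈ [0,z] of [ (1-ε)·H_b(δ) + (1-ε)·(1-δ)·h*_ε(1) + ε·h*_ε(1-δ) + (1-ε)·δ·h*_ε(0) ]. -/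

import Mathlib

/-- Binary entropy function (base 2), with the convention `0 * log 0 = 0`. -/
noncomputable def Hb (p : ℝ) : ℝ := -p * Real.logb 2 p - (1 - p) * Real.logb 2 (1 - p)

/-!
Write `c = 1 - ε` and `g(q) = c·H_b(q) - c·ρ·q` for the lower branch of `h`. Clearing the
denominator, the maximality of `p_ε` says exactly that `g ≤ ρ` on `[0, 1/2]` with equality at
`p_ε`, and the symmetry `H_b(1 - q) = H_b(q)` extends the bound to `[0, 1]`. Since `h(0) = 0` and
`h(1) = ρ`, the objective equals `g(δ) + ρ` for `δ ≤ 1 - p_ε`. For `z ≤ p_ε`, the concave function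
`g` is nondecreasing on `[0, p_ε]` (its maximum there is at `p_ε`), so the supremum is attained at
`δ = z`. For `z > p_ε`, the objective is at most `2ρ`: on `δ ≥ 1 - p_ε` it equals
`(1 + ε)·g(1 - δ) + 2c·(1 - δ)·ρ` with `1 - δ ≤ 1/2`; and `δ = p_ε` attains `2ρ`.
-/

open Set Real

lemma Hb_eq_binEntropy_div (p : ℝ) : Hb p = binEntropy p / log 2 := by
  simp only [Hb, binEntropy, logb, log_inv]
  ring

lemma Hb_zero : Hb 0 = 0 := by simp [Hb_eq_binEntropy_div]

lemma Hb_one_sub (p : ℝ) : Hb (1 - p) = Hb p := by simp [Hb_eq_binEntropy_div]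

lemma Hb_nonneg {p : ℝ} (h0 : 0 ≤ p) (h1 : p ≤ 1) : 0 ≤ Hb p := by
  rw [Hb_eq_binEntropy_div]
  exact div_nonneg (binEntropy_nonneg h0 h1) (log_nonneg one_le_two)

lemma concaveOn_Hb : ConcaveOn ℝ (Icc 0 1) Hb := by
  have : Hb = (log 2)⁻¹ • binEntropy := by
    ext p; simp [Hb_eq_binEntropy_div, div_eq_inv_mul]
  rw [this]
  exact strictConcave_binEntropy.concaveOn.smul (by positivity)

theorem ConcaveOn.monotoneOn_Icc_of_le_right {𝕜 β : Type*} [Field 𝕜] [LinearOrder 𝕜]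
    [IsStrictOrderedRing 𝕜] [AddCommGroup β] [LinearOrder β] [IsOrderedAddMonoid β] [Module 𝕜 β]
    [IsStrictOrderedModule 𝕜 β] {s : Set 𝕜} {f : 𝕜 → β} {a b : 𝕜}
    (hf : ConcaveOn 𝕜 s f) (hs : Icc a b ⊆ s) (hb : ∀ x ∈ Icc a b, f x ≤ f b) :
    MonotoneOn f (Icc a b) := fun x hx _ hy hxy =>
  (min_eq_left (hb x hx)).symm.trans_le
    (hf.min_le_of_mem_Icc (hs hx) (hs ⟨hx.1.trans hx.2, le_rfl⟩) ⟨hxy, hy.2⟩)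

noncomputable def hLow (ε ρ z : ℝ) : ℝ := (1 - ε) * Hb z - z * (1 - ε) * ρ

lemma concaveOn_hLow {ε : ℝ} (hε : ε ≤ 1) (ρ : ℝ) : ConcaveOn ℝ (Icc 0 1) (hLow ε ρ) := by
  have : hLow ε ρ = (1 - ε) • Hb - LinearMap.mulRight ℝ ((1 - ε) * ρ) := by
    ext z; simp only [hLow, Pi.sub_apply, Pi.smul_apply, smul_eq_mul, LinearMap.mulRight_apply]
    ring
  rw [this]
  exact (concaveOn_Hb.smul (sub_nonneg.2 hε)).sub
    ((LinearMap.mulRight ℝ ((1 - ε) * ρ)).convexOn (convex_Icc 0 1))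

section hLow

variable {ε ρ : ℝ}

lemma hLow_sub_eq (hε : ε < 1) {q : ℝ} (hq : 0 ≤ q) :
    hLow ε ρ q - ρ = (1 - ε) * (q + 1 / (1 - ε)) * (Hb q / (q + 1 / (1 - ε)) - ρ) := by
  have hc : 0 < 1 - ε := sub_pos.2 hε
  have : q + 1 / (1 - ε) ≠ 0 := by positivity
  simp only [hLow]
  field_simp
  ring

lemma hLow_le_of_div_le (hε : ε < 1) {q : ℝ} (hq : 0 ≤ q)
    (h : Hb q / (q + 1 / (1 - ε)) ≤ ρ) : hLow ε ρ q ≤ ρ := by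
  have : 0 < (1 - ε) * (q + 1 / (1 - ε)) := by
    have := sub_pos.2 hε; positivity
  rw [← sub_nonpos, hLow_sub_eq hε hq]
  exact mul_nonpos_of_nonneg_of_nonpos this.le (sub_nonpos.2 h)

lemma hLow_eq_of_div_eq (hε : ε < 1) {q : ℝ} (hq : 0 ≤ q)
    (h : Hb q / (q + 1 / (1 - ε)) = ρ) : hLow ε ρ q = ρ := by
  rw [← sub_eq_zero, hLow_sub_eq hε hq, h, sub_self, mul_zero]

lemma hLow_one_sub (z : ℝ) : hLow ε ρ (1 - z) = hLow ε ρ z + (2 * z - 1) * ((1 - ε) * ρ) := by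
  simp only [hLow, Hb_one_sub]
  ring

lemma hLow_le_of_forall_le_half (hε : ε ≤ 1) (hρ : 0 ≤ ρ)
    (hhalf : ∀ q ∈ Icc (0 : ℝ) (1 / 2), hLow ε ρ q ≤ ρ) : ∀ z ∈ Icc (0 : ℝ) 1, hLow ε ρ z ≤ ρ := by
  intro z hz
  rcases le_or_gt z (1 / 2) with hz2 | hz2
  · exact hhalf z ⟨hz.1, hz2⟩
  · have h1 := hhalf (1 - z) ⟨by linarith [hz.2], by linarith⟩
    have h2 : 0 ≤ (2 * z - 1) * ((1 - ε) * ρ) :=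
      mul_nonneg (by linarith) (mul_nonneg (sub_nonneg.2 hε) hρ)
    rw [hLow_one_sub] at h1
    linarith

end hLow

noncomputable def bellmanObjective (ε : ℝ) (h : ℝ → ℝ) (δ : ℝ) : ℝ :=
  (1 - ε) * Hb δ + (1 - ε) * (1 - δ) * h 1 + ε * h (1 - δ) + (1 - ε) * δ * h 0

section bellmanObjective

variable {ε ρ δ : ℝ} {h : ℝ → ℝ}

lemma bellmanObjective_of_eq_high (h0 : h 0 = 0) (h1 : h 1 = ρ) (hδ : h (1 - δ) = ρ) :
    bellmanObjective ε h δ = hLow ε ρ δ + ρ := by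
  simp only [bellmanObjective, hLow, h0, h1, hδ]
  ring

lemma bellmanObjective_of_eq_low (h0 : h 0 = 0) (h1 : h 1 = ρ)
    (hδ : h (1 - δ) = hLow ε ρ (1 - δ)) :
    bellmanObjective ε h δ = (1 + ε) * hLow ε ρ (1 - δ) + 2 * (1 - δ) * ((1 - ε) * ρ) := by
  simp only [bellmanObjective, hLow] at hδ ⊢
  rw [h0, h1, hδ, Hb_one_sub]
  ring

lemma bellmanObjective_le {p : ℝ} (hε0 : 0 ≤ ε) (hε1 : ε ≤ 1) (hρ : 0 ≤ ρ) (hp : p ≤ 1 / 2)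
    (hbound : ∀ q ∈ Icc (0 : ℝ) 1, hLow ε ρ q ≤ ρ) (h0 : h 0 = 0) (h1 : h 1 = ρ)
    (hlow : ∀ z : ℝ, 0 ≤ z → z ≤ p → h z = hLow ε ρ z)
    (hhigh : ∀ z : ℝ, p ≤ z → z ≤ 1 → h z = ρ) (hδ : δ ∈ Icc (0 : ℝ) 1) :
    bellmanObjective ε h δ ≤ ρ + ρ := by
  obtain ⟨hδ0, hδ1⟩ := hδ
  rcases le_or_gt δ (1 - p) with hδp | hδp
  · rw [bellmanObjective_of_eq_high h0 h1 (hhigh _ (by linarith) (by linarith))]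
    linarith [hbound δ ⟨hδ0, hδ1⟩]
  · rw [bellmanObjective_of_eq_low h0 h1 (hlow _ (by linarith) (by linarith))]
    have hlow_le : (1 + ε) * hLow ε ρ (1 - δ) ≤ (1 + ε) * ρ :=
      mul_le_mul_of_nonneg_left (hbound _ ⟨by linarith, by linarith⟩) (by linarith)
    have hlin : 2 * (1 - δ) * ((1 - ε) * ρ) ≤ 1 * ((1 - ε) * ρ) :=
      mul_le_mul_of_nonneg_right (by linarith) (mul_nonneg (sub_nonneg.2 hε1) hρ)
    linarith

end bellmanObjective

/-- Let ε ∈ [0,1), let `ρ` be the maximum of `H_b(p)/(p + 1/(1-ε))` over p ∈ [0,1/2],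
attained at `pε`, and let `h` be the function equal to `(1-ε)·H_b(z) - z·(1-ε)·ρ` for
`0 ≤ z ≤ pε` and equal to `ρ` for `pε ≤ z ≤ 1`. Then the Bellman equation holds: for every
z ∈ [0,1],
`h(z) + ρ = sup_{δ ∈ [0,z]} [(1-ε)·H_b(δ) + (1-ε)(1-δ)·h(1) + ε·h(1-δ) + (1-ε)·δ·h(0)]`. -/
theorem bellman_equation (ε ρ pε : ℝ) (h : ℝ → ℝ) (hε0 : 0 ≤ ε) (hε1 : ε < 1)
    (hpε : pε ∈ Set.Icc (0 : ℝ) (1 / 2))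
    (hmax : ∀ q ∈ Set.Icc (0 : ℝ) (1 / 2),
      Hb q / (q + 1 / (1 - ε)) ≤ Hb pε / (pε + 1 / (1 - ε)))
    (hρ : ρ = Hb pε / (pε + 1 / (1 - ε)))
    (hlow : ∀ z : ℝ, 0 ≤ z → z ≤ pε → h z = (1 - ε) * Hb z - z * (1 - ε) * ρ)
    (hhigh : ∀ z : ℝ, pε ≤ z → z ≤ 1 → h z = ρ) :
    ∀ z ∈ Set.Icc (0 : ℝ) 1,
      h z + ρ =
        sSup ((fun δ => (1 - ε) * Hb δ + (1 - ε) * (1 - δ) * h 1 + ε * h (1 - δ)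
          + (1 - ε) * δ * h 0) '' Set.Icc (0 : ℝ) z) := by
  rintro z ⟨hz0, hz1⟩
  obtain ⟨hp0, hp2⟩ := hpε
  have hp1 : pε ≤ 1 := by linarith
  have hρ0 : 0 ≤ ρ := hρ ▸ div_nonneg (Hb_nonneg hp0 hp1) (by have := sub_pos.2 hε1; positivity)
  have hhalf : ∀ q ∈ Icc (0 : ℝ) (1 / 2), hLow ε ρ q ≤ ρ := fun q hq =>
    hLow_le_of_div_le hε1 hq.1 (hρ ▸ hmax q hq)
  have hbound := hLow_le_of_forall_le_half hε1.le hρ0 hhalf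
  have hpeak : hLow ε ρ pε = ρ := hLow_eq_of_div_eq hε1 hp0 hρ.symm
  have h0 : h 0 = 0 := by rw [hlow 0 le_rfl hp0, Hb_zero]; ring
  have h1 : h 1 = ρ := hhigh 1 hp1 le_rfl
  have hobj (δ : ℝ) (hδ : δ ∈ Icc 0 (1 - pε)) : bellmanObjective ε h δ = hLow ε ρ δ + ρ :=
    bellmanObjective_of_eq_high h0 h1 (hhigh (1 - δ) (by linarith [hδ.2]) (by linarith [hδ.1]))
  change h z + ρ = sSup (bellmanObjective ε h '' Icc 0 z)
  refine (IsGreatest.csSup_eq ?_).symm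
  rcases le_or_gt z pε with hzp | hzp
  · have hmono : MonotoneOn (hLow ε ρ) (Icc 0 pε) :=
      (concaveOn_hLow hε1.le ρ).monotoneOn_Icc_of_le_right (Icc_subset_Icc_right hp1)
        fun x hx => (hhalf x ⟨hx.1, hx.2.trans hp2⟩).trans_eq hpeak.symm
    rw [show h z = hLow ε ρ z from hlow z hz0 hzp, ← hobj z ⟨hz0, by linarith⟩]
    refine ⟨mem_image_of_mem _ ⟨hz0, le_rfl⟩, forall_mem_image.2 fun δ hδ => ?_⟩
    rw [hobj δ ⟨hδ.1, by linarith [hδ.2]⟩, hobj z ⟨hz0, by linarith⟩]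
    exact add_le_add_left (hmono ⟨hδ.1, hδ.2.trans hzp⟩ ⟨hz0, hzp⟩ hδ.2) ρ
  · rw [hhigh z hzp.le hz1]
    refine ⟨⟨pε, ⟨hp0, hzp.le⟩, by rw [hobj pε ⟨hp0, by linarith⟩, hpeak]⟩,
      forall_mem_image.2 fun δ hδ => ?_⟩
    exact bellmanObjective_le hε0 hε1.le hρ0 hp2 hbound h0 h1 hlow hhigh ⟨hδ.1, hδ.2.trans hz1⟩
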